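/- Normalization of l-factors: let A be an l-factor with root index i, L = {x ∈ ind(A) : x < i}, R = {x ∈ ind(A) : x > i}. Then modulo the congruence I: if L and R are both nonempty there exist l-factors A_L, A_R with ind(A_L)=L, ind(A_R)=R and A =_I (2^i ∘_2 A_R) ∘_1 A_L; if L = ∅ then A =_I 2^i ∘_2 A_R for some l-factor A_R with ind(A_R)=R; if R = ∅ then A =_I 2^i ∘_1 A_L for some l-factor A_L with ind(A_L)=L; and if ind(A) = {i} then A = 2^i. -/

import Mathlib

/-- Indexed terms of the language `L^I`: generators `2^k` and partial compositions. -/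
inductive Trm : Type
  | gen : ℕ → Trm
  | comp : Trm → ℕ → Trm → Trm
deriving DecidableEq

namespace Trm

/-- Arity `|A|`. -/
def arity : Trm → ℕ
  | gen _ => 2
  | comp A _ B => A.arity + B.arity - 1

/-- Set of indices occurring in a term. -/
def ind : Trm → Finset ℕ
  | gen k => {k}
  | comp A _ B => A.ind ∪ B.ind

/-- Root index. -/
def root : Trm → ℕ
  | gen k => k
  | comp A _ _ => A.root

/-- Number of occurrences of the generator. -/
def countGen : Trm → ℕ
  | gen _ => 1
  | comp A _ B => A.countGen + B.countGen

end Trm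

/-- The congruence `=_I` generated by (assoc1) and (assoc2). -/
inductive IEq : Trm → Trm → Prop
  | refl (A : Trm) : IEq A A
  | symm {A B} : IEq A B → IEq B A
  | trans {A B C} : IEq A B → IEq B C → IEq A C
  | congr {A A' B B'} (n : ℕ) : IEq A A' → IEq B B' →
      IEq (Trm.comp A n B) (Trm.comp A' n B')
  | assoc1 (A B C : Trm) (n m : ℕ) : n ≤ m → m < n + B.arity →
      IEq (Trm.comp (Trm.comp A n B) m C) (Trm.comp A n (Trm.comp B (m - n + 1) C))
  | assoc2 (A B C : Trm) (n m : ℕ) : n + B.arity ≤ m →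
      IEq (Trm.comp (Trm.comp A n B) m C) (Trm.comp (Trm.comp A (m - B.arity + 1) C) n B)

/-- Planar binary trees. -/
inductive BT : Type
  | leaf : BT
  | node : BT → BT → BT
deriving DecidableEq

namespace BT

/-- Number of leaves. -/
def leaves : BT → ℕ
  | leaf => 1
  | node l r => l.leaves + r.leaves

/-- Graft `S` at the `i`-th leaf (1-indexed) of a tree. -/
def graft : BT → ℕ → BT → BT
  | leaf, _, S => S
  | node l r, i, S =>
    if i ≤ l.leaves then node (l.graft i S) r else node l (r.graft (i - l.leaves) S)

end BT

/-- Evaluation `ε` of indexed terms to planar binary trees. -/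
def Trm.eval : Trm → BT
  | Trm.gen _ => BT.node BT.leaf BT.leaf
  | Trm.comp A i B => A.eval.graft i B.eval

/-- `l`-factors. -/
inductive LFactor : Trm → Prop
  | gen (k : ℕ) : LFactor (Trm.gen k)
  | step {A : Trm} (j : ℕ) : LFactor A → j ∉ A.ind →
      LFactor (Trm.comp A ((A.ind.filter (· < j)).card + 1) (Trm.gen j))

/-- Auxiliary for the head-insertion encoding: `done` is the list of already
inserted letters. -/
def hAux : Trm → List ℕ → List ℕ → Trm
  | A, _, [] => A
  | A, done, y :: rest =>
      hAux (Trm.comp A ((done.filter (· < y)).length + 1) (Trm.gen y)) (done ++ [y]) rest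

/-- Head-insertion encoding `h` (junk value on the empty word). -/
def hWord : List ℕ → Trm
  | [] => Trm.gen 0
  | x :: rest => hAux (Trm.gen x) [x] rest

/-- `u_a(x)`: number of letters to the left of `x` in `a` that are greater than `x`. -/
def uCount (a : List ℕ) (x : ℕ) : ℕ := ((a.takeWhile (· ≠ x)).filter (x < ·)).length

/-- Decreasing rearrangement of a word. -/
def sortDesc (a : List ℕ) : List ℕ := (a.mergeSort (· ≤ ·)).reverse

/-- Decreasing encoding `f` (junk value on the empty word). -/
def fWord (a : List ℕ) : Trm :=
  match sortDesc a with
  | [] => Trm.gen 0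
  | k :: rest => rest.foldl (fun A x => Trm.comp A (uCount a x + 1) (Trm.gen x)) (Trm.gen k)

/-- Standardization of a word of distinct integers. -/
def std (a : List ℕ) : List ℕ := a.map (fun x => (a.filter (· ≤ x)).length)

/-- Tonks' vertex map, splitting form `φ`. -/
def tonksPhi (a : List ℕ) : BT :=
  match ha : a.getLast? with
  | none => BT.leaf
  | some x =>
      BT.node (tonksPhi (std (a.filter (· < x)))) (tonksPhi (std (a.filter (x < ·))))
termination_by a.length
decreasing_by
  · have hx : x ∈ a := List.mem_of_mem_getLast? (Option.mem_def.mpr ha)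
    have : (a.filter (· < x)).length < a.length := by
      apply List.length_filter_lt_length_iff_exists.2
      exact ⟨x, hx, by simp⟩
    simp only [std, List.length_map, List.length_unattach]
    exact lt_of_lt_of_eq (List.length_filter_lt_length_iff_exists.2
      ⟨⟨x, hx⟩, List.mem_attach _ _, by simp⟩) List.length_attach
  · have hx : x ∈ a := List.mem_of_mem_getLast? (Option.mem_def.mpr ha)
    have : (a.filter (x < ·)).length < a.length := by
      apply List.length_filter_lt_length_iff_exists.2
      exact ⟨x, hx, by simp⟩
    simp only [std, List.length_map, List.length_unattach]
    exact lt_of_lt_of_eq (List.length_filter_lt_length_iff_exists.2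
      ⟨⟨x, hx⟩, List.mem_attach _ _, by simp⟩) List.length_attach

/-- Tonks' vertex map, head-grafting form `φ̂`. -/
def phiHat : List ℕ → BT
  | [] => BT.leaf
  | x :: rest => (phiHat (std rest)).graft x (BT.node BT.leaf BT.leaf)
termination_by a => a.length
decreasing_by
  simp [std]

/-- The Loday–Ronco map `ψ`. -/
def lodayPsi (a : List ℕ) : BT :=
  match hm : a.maximum with
  | none => BT.leaf
  | some m =>
      let i := a.idxOf m
      BT.node (lodayPsi (std (a.take i))) (lodayPsi (std (a.drop (i + 1))))
termination_by a.length
decreasing_by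
  · have hmem : m ∈ a := List.maximum_mem hm
    have hi : a.idxOf m < a.length := List.idxOf_lt_length_iff.2 hmem
    simp only [std, List.length_map, List.length_take]
    omega
  · have : a ≠ [] := by rintro rfl; simp [List.maximum] at hm
    have : 0 < a.length := List.length_pos_iff.2 this
    simp only [std, List.length_map, List.length_drop]
    omega

/-- Inverse of a permutation word on `{1,…,n}`. -/
def invWord (π : List ℕ) : List ℕ :=
  (List.range π.length).map (fun j => π.idxOf (j + 1) + 1)

/-- One Tamari (right rotation) step, at any subtree. -/
inductive TamariStep : BT → BT → Prop
  | rot (X Y Z : BT) : TamariStep (BT.node (BT.node X Y) Z) (BT.node X (BT.node Y Z))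
  | left {l l'} (r : BT) : TamariStep l l' → TamariStep (BT.node l r) (BT.node l' r)
  | right (l : BT) {r r'} : TamariStep r r' → TamariStep (BT.node l r) (BT.node l r')

/-- The Tamari order. -/
def TamariLE : BT → BT → Prop := Relation.ReflTransGen TamariStep

/-- The strict Tamari order. -/
def TamariLT : BT → BT → Prop := Relation.TransGen TamariStep

/-- One cover of the right weak Bruhat order on words. -/
inductive BruhatStep : List ℕ → List ℕ → Prop
  | swap (α : List ℕ) {u v : ℕ} (β : List ℕ) : u < v →
      BruhatStep (α ++ u :: v :: β) (α ++ v :: u :: β)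

/-- The right weak Bruhat order on words. -/
def BruhatLE : List ℕ → List ℕ → Prop := Relation.ReflTransGen BruhatStep

/-- Head-insertion index `k(a; σ)`. -/
def kIdx (a : ℕ) (σ : List ℕ) : ℕ := 1 + (σ.filter (· < a)).length

/-!
Induct along the construction of the l-factor, keeping it `=_I`-equal to the normal form
`(2^i ∘₂ A_R) ∘₁ A_L`, with `A_L`, `A_R` l-factors on `L`, `R` (omitted when empty). An l-factor
on `s` has arity `|s| + 1`, so the leaves `1, …, |L| + 1` of the normal form are those of `A_L`
and the rest belong to `2^i ∘₂ A_R`. A new generator `2^j` with `j < i` is grafted at position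
`|{x ∈ L | x < j}| + 1`, a leaf of `A_L`, and (assoc1) turns this into an l-factor step of `A_L`.
For `j > i` the position is `|L| + |{x ∈ R | x < j}| + 2`: (assoc2) moves `2^j` past `A_L`, and
(assoc1) then makes it an l-factor step of `A_R`.
-/

namespace Trm

theorem ind_nonempty : ∀ A : Trm, A.ind.Nonempty
  | gen k => Finset.singleton_nonempty k
  | comp A _ _ => A.ind_nonempty.mono Finset.subset_union_left

theorem root_mem_ind : ∀ A : Trm, A.root ∈ A.ind
  | gen k => Finset.mem_singleton_self k
  | comp A _ _ => Finset.mem_union_left _ A.root_mem_ind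

theorem ind_comp_gen (A : Trm) (n j : ℕ) : (comp A n (gen j)).ind = insert j A.ind := by
  rw [ind, ind, Finset.union_comm, Finset.insert_eq]

def compOpt (X : Trm) (n : ℕ) : Option Trm → Trm
  | none => X
  | some B => comp X n B

end Trm

open Trm

theorem IEq.compOpt {X Y : Trm} (h : IEq X Y) (n : ℕ) :
    ∀ o, IEq (X.compOpt n o) (Y.compOpt n o)
  | none => h
  | some B => IEq.congr n h (IEq.refl B)

/-- `(2^i ∘₂ A_R) ∘₁ A_L`, where `none` stands for an absent factor. -/
def normalForm (i : ℕ) (oL oR : Option Trm) : Trm :=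
  ((gen i).compOpt 2 oR).compOpt 1 oL

/-- Grafting `2^j` onto an l-factor as in `LFactor.step`, or starting the l-factor `2^j`. -/
def insertGen : Option Trm → ℕ → Trm
  | none, j => gen j
  | some B, j => comp B ((B.ind.filter (· < j)).card + 1) (gen j)

def IsLFactorOn : Option Trm → Finset ℕ → Prop
  | none, s => s = ∅
  | some B, s => LFactor B ∧ B.ind = s

theorem LFactor.arity_eq {A : Trm} (hA : LFactor A) : A.arity = A.ind.card + 1 := by
  induction hA with
  | gen k => rfl
  | step j _ hj ih =>
    rw [ind_comp_gen, Finset.card_insert_of_notMem hj, arity, ih, arity]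
    omega

theorem LFactor.eq_gen_of_ind_eq_singleton {A : Trm} (hA : LFactor A) {i : ℕ}
    (h : A.ind = {i}) : A = Trm.gen i := by
  cases hA with
  | gen k => rw [ind, Finset.singleton_inj] at h; rw [h]
  | @step B j _ hj =>
    rw [ind_comp_gen] at h
    obtain ⟨x, hx⟩ := B.ind_nonempty
    have hxi : x = i := Finset.mem_singleton.1 (h ▸ Finset.mem_insert_of_mem hx)
    have hji : j = i := Finset.mem_singleton.1 (h ▸ Finset.mem_insert_self j B.ind)
    exact absurd (hji ▸ hxi ▸ hx) hj

namespace IsLFactorOn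

variable {o : Option Trm} {s : Finset ℕ}

theorem eq_none (ho : IsLFactorOn o ∅) : o = none := by
  cases o with
  | none => rfl
  | some B => exact absurd ho.2 B.ind_nonempty.ne_empty

theorem exists_eq_some (ho : IsLFactorOn o s) (hs : s.Nonempty) :
    ∃ B, LFactor B ∧ B.ind = s ∧ o = some B := by
  cases o with
  | none => exact absurd ho hs.ne_empty
  | some B => exact ⟨B, ho.1, ho.2, rfl⟩

theorem insertGen (ho : IsLFactorOn o s) {j : ℕ} (hj : j ∉ s) :
    IsLFactorOn (some (insertGen o j)) (insert j s) := by
  cases o with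
  | none =>
    obtain rfl : s = ∅ := ho
    exact ⟨LFactor.gen j, rfl⟩
  | some B =>
    obtain ⟨hB, rfl⟩ := ho
    exact ⟨LFactor.step j hB hj, ind_comp_gen _ _ _⟩

/-- (assoc1) moves a generator grafted onto a leaf of the factor into the factor. -/
theorem ieq_comp_gen (ho : IsLFactorOn o s) (X : Trm) (n j : ℕ) :
    IEq (comp (X.compOpt n o) ((s.filter (· < j)).card + n) (gen j))
      (X.compOpt n (some (_root_.insertGen o j))) := by
  cases o with
  | none =>
    obtain rfl : s = ∅ := ho
    rw [Finset.filter_empty, Finset.card_empty, zero_add]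
    exact IEq.refl _
  | some B =>
    obtain ⟨hB, rfl⟩ := ho
    have h := IEq.assoc1 X B (gen j) n ((B.ind.filter (· < j)).card + n) (by omega)
      (by have := Finset.card_filter_le B.ind (· < j); rw [hB.arity_eq]; omega)
    rwa [Nat.add_sub_cancel] at h

/-- (assoc2) moves a generator grafted to the right of the factor past it. -/
theorem ieq_comp_gen_of_two_le (ho : IsLFactorOn o s) (X : Trm) {m : ℕ} (hm : 2 ≤ m)
    (j : ℕ) :
    IEq (comp (X.compOpt 1 o) (s.card + m) (gen j)) ((comp X m (gen j)).compOpt 1 o) := by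
  cases o with
  | none =>
    obtain rfl : s = ∅ := ho
    rw [Finset.card_empty, zero_add]
    exact IEq.refl _
  | some B =>
    obtain ⟨hB, rfl⟩ := ho
    have h := IEq.assoc2 X B (gen j) 1 (B.ind.card + m) (by rw [hB.arity_eq]; omega)
    rwa [hB.arity_eq, show B.ind.card + m - (B.ind.card + 1) + 1 = m by omega] at h

end IsLFactorOn

theorem Finset.filter_lt_eq_filter_filter_lt {s : Finset ℕ} {i j : ℕ} (hji : j < i) :
    s.filter (· < j) = (s.filter (· < i)).filter (· < j) := by
  rw [Finset.filter_filter]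
  exact Finset.filter_congr fun x _ => by omega

theorem Finset.card_filter_lt_add_one_of_mem_of_lt {s : Finset ℕ} {i j : ℕ} (hi : i ∈ s)
    (hij : i < j) :
    (s.filter (· < j)).card + 1 =
      (s.filter (· < i)).card + (((s.filter (i < ·)).filter (· < j)).card + 2) := by
  have hsplit : s.filter (· < j) =
      insert i (s.filter (· < i) ∪ (s.filter (i < ·)).filter (· < j)) := by
    ext x
    simp only [Finset.mem_filter, Finset.mem_insert, Finset.mem_union]
    grind
  rw [hsplit, Finset.card_insert_of_notMem (by simp), Finset.card_union_of_disjoint]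
  · omega
  · exact Finset.disjoint_left.2 fun x hx hx' => by
      simp only [Finset.mem_filter] at hx hx'
      omega

theorem LFactor.exists_ieq_normalForm {A : Trm} (hA : LFactor A) :
    ∃ oL oR, IsLFactorOn oL (A.ind.filter (· < A.root)) ∧
      IsLFactorOn oR (A.ind.filter (A.root < ·)) ∧ IEq A (normalForm A.root oL oR) := by
  induction hA with
  | gen k =>
    exact ⟨none, none, (Finset.filter_singleton (· < k) k).trans (if_neg (lt_irrefl k)),
      (Finset.filter_singleton (k < ·) k).trans (if_neg (lt_irrefl k)), IEq.refl _⟩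
  | @step A j _ hj ih =>
    obtain ⟨oL, oR, hL, hR, hnf⟩ := ih
    simp only [root, ind_comp_gen]
    rcases (ne_of_mem_of_not_mem A.root_mem_ind hj).lt_or_gt with hij | hij
    · refine ⟨oL, some (insertGen oR j), ?_, ?_, ?_⟩
      · rwa [Finset.filter_insert, if_neg hij.not_gt]
      · rw [Finset.filter_insert, if_pos hij]
        exact hR.insertGen fun h => hj (Finset.mem_filter.1 h).1
      · rw [Finset.card_filter_lt_add_one_of_mem_of_lt A.root_mem_ind hij]
        exact (IEq.congr _ hnf (IEq.refl (Trm.gen j))).trans <|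
          (hL.ieq_comp_gen_of_two_le _ (by omega) j).trans <|
            (hR.ieq_comp_gen (Trm.gen A.root) 2 j).compOpt 1 oL
    · refine ⟨some (insertGen oL j), oR, ?_, ?_, ?_⟩
      · rw [Finset.filter_insert, if_pos hij]
        exact hL.insertGen fun h => hj (Finset.mem_filter.1 h).1
      · rwa [Finset.filter_insert, if_neg hij.not_gt]
      · rw [Finset.filter_lt_eq_filter_filter_lt hij]
        exact (IEq.congr _ hnf (IEq.refl (Trm.gen j))).trans (hL.ieq_comp_gen _ 1 j)

theorem lfactor_normalization (A : Trm) (hA : LFactor A) (i : ℕ) (hi : i = A.root)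
    (L R : Finset ℕ) (hL : L = A.ind.filter (· < i)) (hR : R = A.ind.filter (i < ·)) :
    (L.Nonempty → R.Nonempty → ∃ AL AR : Trm, LFactor AL ∧ LFactor AR ∧
        AL.ind = L ∧ AR.ind = R ∧
        IEq A (Trm.comp (Trm.comp (Trm.gen i) 2 AR) 1 AL)) ∧
    (L = ∅ → R.Nonempty → ∃ AR : Trm, LFactor AR ∧ AR.ind = R ∧
        IEq A (Trm.comp (Trm.gen i) 2 AR)) ∧
    (R = ∅ → L.Nonempty → ∃ AL : Trm, LFactor AL ∧ AL.ind = L ∧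
        IEq A (Trm.comp (Trm.gen i) 1 AL)) ∧
    (A.ind = {i} → A = Trm.gen i) := by
  subst hi hL hR
  obtain ⟨oL, oR, hoL, hoR, hnf⟩ := hA.exists_ieq_normalForm
  refine ⟨fun hLne hRne => ?_, fun hL0 hRne => ?_, fun hR0 hLne => ?_,
    hA.eq_gen_of_ind_eq_singleton⟩
  · obtain ⟨AL, hAL, hALind, rfl⟩ := hoL.exists_eq_some hLne
    obtain ⟨AR, hAR, hARind, rfl⟩ := hoR.exists_eq_some hRne
    exact ⟨AL, AR, hAL, hAR, hALind, hARind, hnf⟩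
  · obtain rfl := (hL0 ▸ hoL).eq_none
    obtain ⟨AR, hAR, hARind, rfl⟩ := hoR.exists_eq_some hRne
    exact ⟨AR, hAR, hARind, hnf⟩
  · obtain rfl := (hR0 ▸ hoR).eq_none
    obtain ⟨AL, hAL, hALind, rfl⟩ := hoL.exists_eq_some hLne
    exact ⟨AL, hAL, hALind, hnf⟩
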